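/- Let L, K be positive integers, let π*, π'* lie in the open simplex Δ^{L-1}, let φ* be an L×K matrix each of whose rows φ*_{l:} lies in the open simplex Δ^{K-1}, and assume φ* has rank L. Let Θ = Δ̄^{L-1} × Δ̄^{L-1} × (Δ̄^{K-1})^L and let p : Θ → ℝ be continuous and strictly positive. For positive integers N, N', let (Y_1, C_1), …, (Y_N, C_N) be i.i.d. random pairs with P(Y_i = l, C_i = k) = π*_l φ*_{lk}, independent of i.i.d. random variables C'_1, …, C'_{N'} with P(C'_j = k) = Σ_{l=1}^L π'*_l φ*_{lk}. For θ = (π, π', φ) ∈ Θ define the posterior score G_{N,N'}(θ) = p(θ) · ∏_{i=1}^N π_{Y_i} φ_{Y_i C_i} · ∏_{j=1}^{N'} (Σ_{l=1}^L π'_l φ_{l C'_j}). Then for every ε > 0 and δ > 0 there exist N₀ and N₀' such that for all N ≥ N₀ and N' ≥ N₀', with probability at least 1 − δ, every θ̂ ∈ Θ maximizing G_{N,N'} over Θ satisfies ‖θ̂ − (π*, π'*, φ*)‖ < ε. -/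

import Mathlib

open Finset MeasureTheory

/-- The open simplex: vectors with strictly positive entries summing to 1. -/
def openSimplex {n : ℕ} (v : Fin n → ℝ) : Prop :=
  (∀ i, 0 < v i) ∧ ∑ i, v i = 1

/-- The closed simplex: vectors with nonnegative entries summing to 1. -/
def closedSimplex {n : ℕ} (v : Fin n → ℝ) : Prop :=
  (∀ i, 0 ≤ v i) ∧ ∑ i, v i = 1

/-- The parameter space `Θ = Δ̄^{L-1} × Δ̄^{L-1} × (Δ̄^{K-1})^L`. -/
def paramSpace (L K : ℕ) :
    Set ((Fin L → ℝ) × (Fin L → ℝ) × (Fin L → Fin K → ℝ)) :=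
  {θ | closedSimplex θ.1 ∧ closedSimplex θ.2.1 ∧ ∀ l, closedSimplex (θ.2.2 l)}

/-- The posterior score
`G_{N,N'}(θ) = p(θ) ∏_i π_{Y_i} φ_{Y_i C_i} ∏_j (Σ_l π'_l φ_{l C'_j})`, evaluated on the
data `ω = ((Y_i, C_i)_i, (C'_j)_j)`. -/
def posteriorScore {L K N N' : ℕ}
    (p : (Fin L → ℝ) × (Fin L → ℝ) × (Fin L → Fin K → ℝ) → ℝ)
    (ω : (Fin N → Fin L × Fin K) × (Fin N' → Fin K))
    (θ : (Fin L → ℝ) × (Fin L → ℝ) × (Fin L → Fin K → ℝ)) : ℝ :=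
  p θ * (∏ i, θ.1 (ω.1 i).1 * θ.2.2 (ω.1 i).1 (ω.1 i).2) *
    ∏ j, ∑ l, θ.2.1 l * θ.2.2 l (ω.2 j)

/-!
Write `a` and `b` for the true laws of a labeled pair and of an unlabeled observation. Up to the
prior, the log-posterior ratio of `θ` against the truth is the sum of the log-likelihood ratios of
the two samples. By `log x ≤ x - 1`, each ratio is at most the Pearson chi-squared statistic of its
sample, whose mean is the number of cells minus one; by Markov's inequality both statistics stay
below `T ~ 1 / δ` with probability `≥ 1 - δ`. Because `φ*` has full rank, `θ` is determined by its
two laws, so by compactness every `θ` at distance `≥ ε` from the truth is `η`-far from `a` or from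
`b` in a truncated Kullback–Leibler divergence. For large samples the empirical laws are then close
enough to `a` and `b` that the corresponding log-likelihood ratio is below `-N η / 2`, which beats
the bounded prior and the other ratio `≤ T`, so such a `θ` does not maximize the posterior.
-/

open Real Filter

section Simplex

variable {β : Type*} [Fintype β]

lemma nonempty_of_sum_eq_one {f : β → ℝ} (h : ∑ u, f u = 1) : Nonempty β := by
  by_contra hβ
  simp [not_nonempty_iff.mp hβ] at h

lemma le_one_of_sum_le_one {f : β → ℝ} (h0 : ∀ u, 0 ≤ f u) (h1 : ∑ u, f u ≤ 1) (u : β) :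
    f u ≤ 1 :=
  (single_le_sum (fun v _ => h0 v) (mem_univ u)).trans h1

end Simplex

section LogInequalities

variable {β : Type*} [Fintype β]

lemma log_sub_log_le_div_sub_one {x y : ℝ} (hx : 0 < x) (hy : 0 < y) :
    log y - log x ≤ y / x - 1 := by
  rw [← log_div hy.ne' hx.ne']
  exact log_le_sub_one_of_pos (div_pos hy hx)

lemma log_sub_log_lt_div_sub_one {x y : ℝ} (hx : 0 < x) (hy : 0 < y) (hxy : y ≠ x) :
    log y - log x < y / x - 1 := by
  rw [← log_div hy.ne' hx.ne']
  exact log_lt_sub_one_of_pos (div_pos hy hx) fun h => hxy ((div_eq_one_iff_eq hx.ne').mp h)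

lemma mul_log_sub_log_le {P q a : ℝ} (hP : 0 ≤ P) (hq : 0 ≤ q) (hPq : 0 < P → 0 < q)
    (ha : 0 < a) : P * (log q - log a) ≤ q - a + (P - a) ^ 2 / a := by
  rcases hP.eq_or_lt with rfl | hP
  · rw [zero_mul, zero_sub, neg_sq, sq, mul_self_div_self]
    linarith
  have hq := hPq hP
  calc P * (log q - log a) = P * (log q - log P) + P * (log P - log a) := by ring
    _ ≤ P * (q / P - 1) + P * (P / a - 1) :=
      add_le_add (mul_le_mul_of_nonneg_left (log_sub_log_le_div_sub_one hP hq) hP.le)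
        (mul_le_mul_of_nonneg_left (log_sub_log_le_div_sub_one ha hP) hP.le)
    _ = q - a + (P - a) ^ 2 / a := by field_simp; ring

lemma sum_mul_log_sub_log_pos {a q : β → ℝ} (ha : ∀ u, 0 < a u) (hq : ∀ u, 0 < q u)
    (hsum : ∑ u, q u ≤ ∑ u, a u) (hne : q ≠ a) : 0 < ∑ u, a u * (log (a u) - log (q u)) := by
  have hterm : ∀ u, a u - q u ≤ a u * (log (a u) - log (q u)) := fun u => by
    have := mul_le_mul_of_nonneg_left (log_sub_log_le_div_sub_one (ha u) (hq u)) (ha u).le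
    rw [mul_sub_one, mul_div_cancel₀ _ (ha u).ne'] at this
    linarith
  obtain ⟨u₀, hu₀⟩ := Function.ne_iff.mp hne
  have hstrict : a u₀ - q u₀ < a u₀ * (log (a u₀) - log (q u₀)) := by
    have := mul_lt_mul_of_pos_left (log_sub_log_lt_div_sub_one (ha u₀) (hq u₀) hu₀) (ha u₀)
    rw [mul_sub_one, mul_div_cancel₀ _ (ha u₀).ne'] at this
    linarith
  have := sum_lt_sum (fun u _ => hterm u) ⟨u₀, mem_univ u₀, hstrict⟩
  rw [sum_sub_distrib] at this
  linarith

end LogInequalities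

section TruncatedDivergence

variable {β : Type*} [Fintype β]

-- Truncating `q` at `t > 0` keeps the divergence finite and continuous in `q` on the whole simplex.
noncomputable def truncKL (a q : β → ℝ) (t : ℝ) : ℝ :=
  ∑ u, a u * (log (a u) - log (max (q u) t))

lemma truncKL_anti {a q : β → ℝ} (ha : ∀ u, 0 ≤ a u) {s t : ℝ} (hs : 0 < s) (hst : s ≤ t) :
    truncKL a q t ≤ truncKL a q s := by
  unfold truncKL
  gcongr with u
  exact ha u

lemma continuous_truncKL {X : Type*} [TopologicalSpace X] (a : β → ℝ) {q : X → β → ℝ}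
    (hq : Continuous q) {t : ℝ} (ht : 0 < t) : Continuous fun x => truncKL a (q x) t := by
  unfold truncKL
  fun_prop (disch := intro x; positivity)

lemma truncKL_of_le {a q : β → ℝ} {t : ℝ} (h : ∀ u, t ≤ q u) :
    truncKL a q t = ∑ u, a u * (log (a u) - log (q u)) := by
  simp only [truncKL, max_eq_left (h _)]

lemma exists_truncKL_pos {a q : β → ℝ} (ha : ∀ u, 0 < a u) (ha1 : ∑ u, a u = 1)
    (hq0 : ∀ u, 0 ≤ q u) (hq1 : ∑ u, q u ≤ 1) (hne : q ≠ a) : ∃ t > 0, 0 < truncKL a q t := by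
  by_cases hq : ∀ u, 0 < q u
  · have := nonempty_of_sum_eq_one ha1
    obtain ⟨u₀, -, hu₀⟩ := exists_min_image univ q univ_nonempty
    refine ⟨q u₀, hq u₀, ?_⟩
    rw [truncKL_of_le fun u => hu₀ u (mem_univ u)]
    exact sum_mul_log_sub_log_pos ha hq (by linarith) hne
  -- a cell that `q` misses costs `a c * log (1 / t)`, which is unbounded as `t → 0`
  push Not at hq
  obtain ⟨c, hc⟩ := hq
  set A := ∑ u, a u * log (a u)
  set t := exp (-((|A| + 1) / a c))
  refine ⟨t, exp_pos _, ?_⟩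
  have ht1 : t ≤ 1 := exp_le_one_iff.mpr (neg_nonpos.mpr (div_nonneg (by positivity) (ha c).le))
  have hterm : ∀ u, 0 ≤ -(a u * log (max (q u) t)) := fun u =>
    neg_nonneg.mpr (mul_nonpos_of_nonneg_of_nonpos (ha u).le (log_nonpos
      (le_max_of_le_right (exp_pos _).le) (max_le (le_one_of_sum_le_one hq0 hq1 u) ht1)))
  have hc : -(a c * log (max (q c) t)) = |A| + 1 := by
    rw [max_eq_right (hc.trans (exp_pos _).le), log_exp]
    field_simp [(ha c).ne']
  have hsum := single_le_sum (fun u _ => hterm u) (mem_univ c)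
  rw [hc, sum_neg_distrib] at hsum
  have : truncKL a q t = A - ∑ u, a u * log (max (q u) t) := by
    rw [truncKL, ← sum_sub_distrib]
    exact sum_congr rfl fun u _ => by ring
  linarith [neg_abs_le A]

end TruncatedDivergence

lemma IsCompact.exists_forall_le_of_antitone {X : Type*} [TopologicalSpace X] {S : Set X}
    (hS : IsCompact S) {F : ℝ → X → ℝ} (hcont : ∀ t > 0, Continuous (F t))
    (hanti : ∀ x, ∀ s > 0, ∀ t ≥ s, F t x ≤ F s x) (hpos : ∀ x ∈ S, ∃ t > 0, 0 < F t x) :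
    ∃ t, 0 < t ∧ t ≤ 1 ∧ ∃ η > 0, ∀ x ∈ S, η ≤ F t x := by
  set U : ℕ → Set X := fun n => {x | 0 < F (1 / (n + 1)) x}
  have hmono : Monotone U := fun m n hmn x hx =>
    hx.trans_le (hanti x _ (by positivity) _ (by gcongr))
  have hcover : S ⊆ ⋃ n, U n := fun x hx => by
    obtain ⟨t, ht, hFt⟩ := hpos x hx
    obtain ⟨n, hn⟩ := exists_nat_one_div_lt ht
    exact Set.mem_iUnion.mpr ⟨n, hFt.trans_le (hanti x _ (by positivity) t hn.le)⟩
  obtain ⟨n, hn⟩ := hS.elim_directed_cover U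
    (fun n => isOpen_lt continuous_const (hcont _ (by positivity))) hcover hmono.directed_le
  obtain ⟨η, hη, hle⟩ := hS.exists_forall_le' (hcont _ (by positivity)).continuousOn hn
  exact ⟨1 / (n + 1), by positivity, div_le_one_of_le₀ (by simp) (by positivity), η, hη, hle⟩

section Empirical

variable {β : Type*} [DecidableEq β] {M : ℕ}

noncomputable def empirical (y : Fin M → β) (u : β) : ℝ := #{i | y i = u} / M

lemma empirical_nonneg (y : Fin M → β) (u : β) : 0 ≤ empirical y u := by
  unfold empirical; positivity

lemma exists_eq_of_empirical_pos {y : Fin M → β} {u : β} (h : 0 < empirical y u) :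
    ∃ i, y i = u := by
  by_contra! hy
  simp [empirical, filter_false_of_mem fun i _ => hy i] at h

variable [Fintype β]

noncomputable def pearsonChiSq (a : β → ℝ) (y : Fin M → β) : ℝ :=
  M * ∑ u, (empirical y u - a u) ^ 2 / a u

noncomputable def logLikRatio (q a : β → ℝ) (y : Fin M → β) : ℝ :=
  ∑ i, (log (q (y i)) - log (a (y i)))

lemma pearsonChiSq_nonneg {a : β → ℝ}
    (ha : ∀ u, 0 ≤ a u) (y : Fin M → β) : 0 ≤ pearsonChiSq a y :=
  mul_nonneg M.cast_nonneg (sum_nonneg fun u _ => div_nonneg (sq_nonneg _) (ha u))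

lemma sum_comp_eq_mul_sum_empirical (y : Fin M → β) (g : β → ℝ) :
    ∑ i, g (y i) = M * ∑ u, empirical y u * g u := by
  rcases Nat.eq_zero_or_pos M with rfl | hM
  · simp
  rw [← sum_fiberwise univ y, mul_sum]
  refine sum_congr rfl fun u _ => ?_
  rw [sum_congr rfl fun i hi => by rw [(mem_filter.mp hi).2], sum_const, nsmul_eq_mul, empirical]
  field_simp

lemma logLikRatio_eq (q a : β → ℝ) (y : Fin M → β) :
    logLikRatio q a y = M * ∑ u, empirical y u * (log (q u) - log (a u)) :=
  sum_comp_eq_mul_sum_empirical y fun u => log (q u) - log (a u)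

lemma mul_sq_empirical_sub_le_pearsonChiSq {a : β → ℝ} (ha : ∀ u, 0 < a u) (ha1 : ∀ u, a u ≤ 1)
    (y : Fin M → β) (u : β) : M * (empirical y u - a u) ^ 2 ≤ pearsonChiSq a y := by
  unfold pearsonChiSq
  gcongr
  exact (le_div_self (sq_nonneg _) (ha u) (ha1 u)).trans
    (single_le_sum (f := fun v => (empirical y v - a v) ^ 2 / a v)
      (fun v _ => div_nonneg (sq_nonneg _) (ha v).le) (mem_univ u))

lemma logLikRatio_le_pearsonChiSq {a q : β → ℝ} (ha : ∀ u, 0 < a u) (ha1 : ∑ u, a u = 1)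
    (hq0 : ∀ u, 0 ≤ q u) (hq1 : ∑ u, q u ≤ 1) {y : Fin M → β} (hqy : ∀ i, 0 < q (y i)) :
    logLikRatio q a y ≤ pearsonChiSq a y := by
  have hpos : ∀ u, 0 < empirical y u → 0 < q u := fun u hu => by
    obtain ⟨i, rfl⟩ := exists_eq_of_empirical_pos hu
    exact hqy i
  have key : ∑ u, empirical y u * (log (q u) - log (a u)) ≤
      ∑ u, (empirical y u - a u) ^ 2 / a u := by
    calc _ ≤ ∑ u, (q u - a u + (empirical y u - a u) ^ 2 / a u) :=
          sum_le_sum fun u _ => mul_log_sub_log_le (empirical_nonneg y u) (hq0 u) (hpos u) (ha u)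
      _ ≤ _ := by rw [sum_add_distrib, sum_sub_distrib, ha1]; linarith
  rw [logLikRatio_eq, pearsonChiSq]
  exact mul_le_mul_of_nonneg_left key M.cast_nonneg

lemma logLikRatio_le_of_le_truncKL {a q : β → ℝ} {t η ρ : ℝ} (ht0 : 0 < t) (ht1 : t ≤ 1)
    (hq1 : ∀ u, q u ≤ 1) {y : Fin M → β} (hqy : ∀ i, 0 < q (y i))
    (hdev : ∀ u, |empirical y u - a u| ≤ ρ) (hρ : ρ * ∑ u, (|log t| + |log (a u)|) ≤ η / 2)
    (hgap : η ≤ truncKL a q t) : logLikRatio q a y ≤ -(M * η / 2) := by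
  have hlog : ∀ u, |log (max (q u) t)| ≤ |log t| := fun u => by
    rw [abs_of_nonpos (log_nonpos (le_max_of_le_right ht0.le) (max_le (hq1 u) ht1)),
      abs_of_nonpos (log_nonpos ht0.le ht1)]
    exact neg_le_neg (log_le_log ht0 (le_max_right _ _))
  have hterm : ∀ u, empirical y u * (log (q u) - log (a u)) ≤
      -(a u * (log (a u) - log (max (q u) t))) + ρ * (|log t| + |log (a u)|) := fun u => by
    have hmax : empirical y u * log (q u) ≤ empirical y u * log (max (q u) t) := by
      rcases (empirical_nonneg y u).eq_or_lt with h | h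
      · rw [← h, zero_mul, zero_mul]
      obtain ⟨i, rfl⟩ := exists_eq_of_empirical_pos h
      exact mul_le_mul_of_nonneg_left (log_le_log (hqy i) (le_max_left _ _)) h.le
    have hdiff : (empirical y u - a u) * (log (max (q u) t) - log (a u)) ≤
        ρ * (|log t| + |log (a u)|) :=
      calc _ ≤ |empirical y u - a u| * |log (max (q u) t) - log (a u)| := by
            rw [← abs_mul]; exact le_abs_self _
        _ ≤ ρ * (|log t| + |log (a u)|) :=
            mul_le_mul (hdev u) ((abs_sub _ _).trans (add_le_add (hlog u) le_rfl))
              (abs_nonneg _) ((abs_nonneg _).trans (hdev u))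
    linarith
  have hsum := sum_le_sum fun u (_ : u ∈ univ) => hterm u
  rw [sum_add_distrib, sum_neg_distrib, ← mul_sum, ← truncKL] at hsum
  rw [logLikRatio_eq, mul_div_assoc, ← mul_neg]
  exact mul_le_mul_of_nonneg_left (by linarith) M.cast_nonneg

lemma eventually_logLikRatio_lt {a : β → ℝ} (ha : ∀ u, 0 < a u) (ha1 : ∑ u, a u = 1)
    {t η : ℝ} (ht0 : 0 < t) (ht1 : t ≤ 1) (hη : 0 < η) (T R : ℝ) :
    ∀ᶠ M in atTop, ∀ y : Fin M → β, pearsonChiSq a y < T → ∀ q : β → ℝ, (∀ u, 0 ≤ q u) →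
      ∑ u, q u ≤ 1 → (∀ i, 0 < q (y i)) → η ≤ truncKL a q t → logLikRatio q a y < -R := by
  set D := ∑ u, (|log t| + |log (a u)|)
  have hD : 0 ≤ D := by positivity
  set ρ := η / (2 * (D + 1))
  have hρ : 0 < ρ := by positivity
  have hρD : ρ * D ≤ η / 2 := by
    rw [div_mul_eq_mul_div, div_le_div_iff₀ (by positivity) two_pos]
    nlinarith
  filter_upwards [tendsto_natCast_atTop_atTop.eventually_gt_atTop (max (T / ρ ^ 2) (2 * R / η))]
    with M hM y hy q hq0 hq1 hqy hgap
  have hdev : ∀ u, |empirical y u - a u| ≤ ρ := fun u => by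
    refine abs_le_of_sq_le_sq ?_ hρ.le
    have h1 := (mul_sq_empirical_sub_le_pearsonChiSq ha (le_one_of_sum_le_one (fun v => (ha v).le)
      ha1.le) y u).trans hy.le
    have h2 := (div_lt_iff₀ (by positivity)).mp ((le_max_left _ _).trans_lt hM)
    nlinarith
  have h3 := (div_lt_iff₀ hη).mp ((le_max_right _ _).trans_lt hM)
  have := logLikRatio_le_of_le_truncKL ht0 ht1 (le_one_of_sum_le_one hq0 hq1) hqy hdev hρD hgap
  linarith

end Empirical

section ProductLaw

variable {β : Type*} [Fintype β] {M : ℕ}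

lemma sum_prod_eq_one {a : β → ℝ} (ha1 : ∑ u, a u = 1) : ∑ y : Fin M → β, ∏ i, a (y i) = 1 := by
  rw [← Fintype.prod_sum fun _ u => a u]
  simp [ha1]

lemma sum_prod_mul_sq_sum {a d : β → ℝ} (ha1 : ∑ u, a u = 1) (hd : ∑ u, a u * d u = 0) :
    ∑ y : Fin M → β, (∏ i, a (y i)) * (∑ i, d (y i)) ^ 2 = M * ∑ u, a u * d u ^ 2 := by
  have hpair : ∀ i j : Fin M, ∑ y : Fin M → β, (∏ k, a (y k)) * (d (y i) * d (y j)) =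
      if i = j then ∑ u, a u * d u ^ 2 else 0 := by
    intro i j
    set f : Fin M → β → ℝ := fun k u =>
      a u * ((if k = i then d u else 1) * (if k = j then d u else 1))
    have hf : ∀ y : Fin M → β, (∏ k, a (y k)) * (d (y i) * d (y j)) = ∏ k, f k (y k) :=
      fun y => by simp only [f, prod_mul_distrib, prod_ite_eq', mem_univ, if_true]
    simp_rw [hf]
    rw [← Fintype.prod_sum]
    split_ifs with hij
    · subst hij
      rw [Fintype.prod_eq_single i fun k hk => by simp [f, hk, ha1]]
      simp [f, sq]
    · exact prod_eq_zero (mem_univ i) (by simp [f, hij, hd])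
  calc _ = ∑ i, ∑ j, ∑ y : Fin M → β, (∏ k, a (y k)) * (d (y i) * d (y j)) := by
        simp_rw [sq, sum_mul_sum, mul_sum]
        rw [sum_comm]
        exact sum_congr rfl fun i _ => sum_comm
    _ = M * ∑ u, a u * d u ^ 2 := by simp [hpair]

lemma sum_prod_mul_pearsonChiSq [DecidableEq β] (hM : M ≠ 0) {a : β → ℝ} (ha : ∀ u, 0 < a u)
    (ha1 : ∑ u, a u = 1) :
    ∑ y : Fin M → β, (∏ i, a (y i)) * pearsonChiSq a y = Fintype.card β - 1 := by
  set d : β → β → ℝ := fun u v => (if v = u then 1 else 0) - a u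
  have hdev : ∀ (y : Fin M → β) u, empirical y u - a u = (∑ i, d u (y i)) / M := by
    intro y u
    simp only [empirical, sum_sub_distrib, sum_boole, sum_const, card_univ, Fintype.card_fin,
      nsmul_eq_mul, d]
    field_simp
  have hd : ∀ u, ∑ v, a v * d u v = 0 := fun u => by
    simp [d, mul_sub, sum_sub_distrib, ← sum_mul, ha1]
  have hd2 : ∀ u, ∑ v, a v * d u v ^ 2 = a u * (1 - a u) := fun u => by
    simp only [sub_sq, ite_pow, one_pow, ne_eq, OfNat.ofNat_ne_zero, not_false_eq_true, zero_pow,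
      mul_ite, mul_one, mul_zero, ite_mul, zero_mul, mul_add, mul_sub, sum_add_distrib,
      sum_sub_distrib, sum_ite_eq', mem_univ, ↓reduceIte, ← sum_mul, ha1, one_mul, d]
    ring
  calc _ = ∑ u, (∑ y : Fin M → β, (∏ i, a (y i)) * (∑ i, d u (y i)) ^ 2) / (M * a u) := by
        simp_rw [pearsonChiSq, hdev, mul_sum]
        rw [sum_comm]
        refine sum_congr rfl fun u _ => ?_
        rw [sum_div]
        refine sum_congr rfl fun y _ => ?_
        field_simp
    _ = ∑ u, (1 - a u) := by
        simp_rw [sum_prod_mul_sq_sum ha1 (hd _), hd2]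
        refine sum_congr rfl fun u _ => ?_
        field_simp [(ha u).ne']
    _ = Fintype.card β - 1 := by simp [sum_sub_distrib, ha1]

end ProductLaw

lemma meas_ge_le_sum_mul_div {Ω : Type*} [Fintype Ω] [MeasurableSpace Ω]
    [MeasurableSingletonClass Ω] {μ : Measure Ω} {w f : Ω → ℝ}
    (hμ : ∀ ω, μ {ω} = ENNReal.ofReal (w ω)) (hw : ∀ ω, 0 ≤ w ω) (hf : ∀ ω, 0 ≤ f ω)
    {s : ℝ} (hs : 0 < s) : μ {ω | s ≤ f ω} ≤ ENNReal.ofReal ((∑ ω, w ω * f ω) / s) := by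
  have hset : {ω | s ≤ f ω} = {ω | ENNReal.ofReal s ≤ ENNReal.ofReal (f ω)} := by
    ext ω; simp [ENNReal.ofReal_le_ofReal_iff (hf ω)]
  rw [hset]
  refine (meas_ge_le_lintegral_div (measurable_of_finite _).aemeasurable
    (ENNReal.ofReal_pos.mpr hs).ne' ENNReal.ofReal_ne_top).trans_eq ?_
  rw [lintegral_fintype, ENNReal.ofReal_div_of_pos hs,
    ENNReal.ofReal_sum_of_nonneg fun ω _ => mul_nonneg (hw ω) (hf ω)]
  simp_rw [hμ, ENNReal.ofReal_mul (hw _), mul_comm]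

lemma ofReal_one_sub_le_measure_and {A B : Type*} [Fintype A] [Fintype B]
    [MeasurableSpace (A × B)] [MeasurableSingletonClass (A × B)] {μ : Measure (A × B)}
    [IsProbabilityMeasure μ] {w₁ f₁ : A → ℝ} {w₂ f₂ : B → ℝ}
    (hμ : ∀ ω, μ {ω} = ENNReal.ofReal (w₁ ω.1 * w₂ ω.2)) (hw₁ : ∀ x, 0 ≤ w₁ x)
    (hw₂ : ∀ y, 0 ≤ w₂ y) (hsum₁ : ∑ x, w₁ x = 1) (hsum₂ : ∑ y, w₂ y = 1)
    (hf₁ : ∀ x, 0 ≤ f₁ x) (hf₂ : ∀ y, 0 ≤ f₂ y) {T : ℝ} (hT : 0 < T) :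
    ENNReal.ofReal (1 - (∑ x, w₁ x * f₁ x + ∑ y, w₂ y * f₂ y) / T) ≤
      μ {ω | f₁ ω.1 < T ∧ f₂ ω.2 < T} := by
  have hw : ∀ ω : A × B, 0 ≤ w₁ ω.1 * w₂ ω.2 := fun ω => mul_nonneg (hw₁ _) (hw₂ _)
  have hbad₁ : μ {ω | T ≤ f₁ ω.1} ≤ ENNReal.ofReal ((∑ x, w₁ x * f₁ x) / T) := by
    convert meas_ge_le_sum_mul_div hμ hw (fun ω => hf₁ ω.1) hT using 4
    rw [Fintype.sum_prod_type]
    simp_rw [mul_right_comm _ (w₂ _), ← mul_sum, hsum₂, mul_one]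
  have hbad₂ : μ {ω | T ≤ f₂ ω.2} ≤ ENNReal.ofReal ((∑ y, w₂ y * f₂ y) / T) := by
    convert meas_ge_le_sum_mul_div hμ hw (fun ω => hf₂ ω.2) hT using 4
    rw [Fintype.sum_prod_type_right]
    simp_rw [mul_assoc, ← sum_mul, hsum₁, one_mul]
  have hcover : Set.univ ⊆ {ω : A × B | f₁ ω.1 < T ∧ f₂ ω.2 < T} ∪ {ω | T ≤ f₁ ω.1} ∪
      {ω | T ≤ f₂ ω.2} := fun ω _ => by
    simp only [Set.mem_union]
    rcases lt_or_ge (f₁ ω.1) T with h₁ | h₁ <;> rcases lt_or_ge (f₂ ω.2) T with h₂ | h₂ <;>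
      tauto
  have hE₁ : 0 ≤ (∑ x, w₁ x * f₁ x) / T :=
    div_nonneg (sum_nonneg fun x _ => mul_nonneg (hw₁ x) (hf₁ x)) hT.le
  have hE₂ : 0 ≤ (∑ y, w₂ y * f₂ y) / T :=
    div_nonneg (sum_nonneg fun y _ => mul_nonneg (hw₂ y) (hf₂ y)) hT.le
  rw [add_div, ENNReal.ofReal_sub _ (add_nonneg hE₁ hE₂), ENNReal.ofReal_one,
    ENNReal.ofReal_add hE₁ hE₂, tsub_le_iff_right]
  calc 1 = μ Set.univ := measure_univ.symm
    _ ≤ μ ({ω | f₁ ω.1 < T ∧ f₂ ω.2 < T} ∪ {ω | T ≤ f₁ ω.1} ∪ {ω | T ≤ f₂ ω.2}) :=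
      measure_mono hcover
    _ ≤ μ {ω | f₁ ω.1 < T ∧ f₂ ω.2 < T} + μ {ω | T ≤ f₁ ω.1} + μ {ω | T ≤ f₂ ω.2} :=
      (measure_union_le _ _).trans (add_le_add (measure_union_le _ _) le_rfl)
    _ ≤ _ := by rw [add_assoc]; gcongr

lemma ofReal_one_sub_le_measure_pearsonChiSq_lt {α β : Type*} [Fintype α] [DecidableEq α]
    [Fintype β] [DecidableEq β] {N N' : ℕ} (hN : N ≠ 0) (hN' : N' ≠ 0)
    [MeasurableSpace ((Fin N → α) × (Fin N' → β))]
    [MeasurableSingletonClass ((Fin N → α) × (Fin N' → β))]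
    {a : α → ℝ} {b : β → ℝ} (ha : ∀ u, 0 < a u) (ha1 : ∑ u, a u = 1) (hb : ∀ v, 0 < b v)
    (hb1 : ∑ v, b v = 1) {μ : Measure ((Fin N → α) × (Fin N' → β))} [IsProbabilityMeasure μ]
    (hμ : ∀ ω, μ {ω} = ENNReal.ofReal ((∏ i, a (ω.1 i)) * ∏ j, b (ω.2 j))) {δ : ℝ}
    (hδ : 0 < δ) :
    ENNReal.ofReal (1 - δ) ≤ μ {ω | pearsonChiSq a ω.1 < (Fintype.card α + Fintype.card β) / δ ∧
      pearsonChiSq b ω.2 < (Fintype.card α + Fintype.card β) / δ} := by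
  have := nonempty_of_sum_eq_one ha1
  have hT : 0 < ((Fintype.card α + Fintype.card β) / δ : ℝ) := by positivity
  refine le_trans ?_ (ofReal_one_sub_le_measure_and hμ
    (fun y => prod_nonneg fun i _ => (ha _).le) (fun z => prod_nonneg fun j _ => (hb _).le)
    (sum_prod_eq_one ha1) (sum_prod_eq_one hb1)
    (pearsonChiSq_nonneg fun u => (ha u).le) (pearsonChiSq_nonneg fun v => (hb v).le) hT)
  rw [sum_prod_mul_pearsonChiSq hN ha ha1, sum_prod_mul_pearsonChiSq hN' hb hb1]
  gcongr
  rw [div_le_iff₀ hT, mul_div_cancel₀ _ hδ.ne']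
  linarith

section Model

variable {L K : ℕ}

abbrev Param (L K : ℕ) : Type := (Fin L → ℝ) × (Fin L → ℝ) × (Fin L → Fin K → ℝ)

def labeledLaw (θ : Param L K) (c : Fin L × Fin K) : ℝ := θ.1 c.1 * θ.2.2 c.1 c.2

def unlabeledLaw (θ : Param L K) (k : Fin K) : ℝ := ∑ l, θ.2.1 l * θ.2.2 l k

lemma openSimplex.closedSimplex {n : ℕ} {v : Fin n → ℝ} (h : openSimplex v) : closedSimplex v :=
  ⟨fun i => (h.1 i).le, h.2⟩

lemma isCompact_paramSpace (L K : ℕ) : IsCompact (paramSpace L K) := by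
  have : paramSpace L K = stdSimplex ℝ (Fin L) ×ˢ stdSimplex ℝ (Fin L) ×ˢ
      Set.univ.pi fun _ => stdSimplex ℝ (Fin K) := by
    ext θ
    simp [paramSpace, closedSimplex, stdSimplex]
  rw [this]
  exact (isCompact_stdSimplex _ _).prod ((isCompact_stdSimplex _ _).prod
    (isCompact_univ_pi fun _ => isCompact_stdSimplex _ _))

lemma continuous_labeledLaw : Continuous (labeledLaw : Param L K → _) := by
  unfold labeledLaw; fun_prop

lemma continuous_unlabeledLaw : Continuous (unlabeledLaw : Param L K → _) := by
  unfold unlabeledLaw; fun_prop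

variable {θ : Param L K}

lemma labeledLaw_nonneg (hθ : θ ∈ paramSpace L K) (c : Fin L × Fin K) : 0 ≤ labeledLaw θ c :=
  mul_nonneg (hθ.1.1 c.1) ((hθ.2.2 c.1).1 c.2)

lemma unlabeledLaw_nonneg (hθ : θ ∈ paramSpace L K) (k : Fin K) : 0 ≤ unlabeledLaw θ k :=
  sum_nonneg fun l _ => mul_nonneg (hθ.2.1.1 l) ((hθ.2.2 l).1 k)

lemma sum_labeledLaw (hθ : θ ∈ paramSpace L K) : ∑ c, labeledLaw θ c = 1 := by
  simp [labeledLaw, Fintype.sum_prod_type, ← mul_sum, (hθ.2.2 _).2, hθ.1.2]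

lemma sum_unlabeledLaw (hθ : θ ∈ paramSpace L K) : ∑ k, unlabeledLaw θ k = 1 := by
  simp only [unlabeledLaw]
  rw [sum_comm]
  simp [← mul_sum, (hθ.2.2 _).2, hθ.2.1.2]

variable {πstar π'star : Fin L → ℝ} {φstar : Fin L → Fin K → ℝ}

lemma mk_mem_paramSpace (hπ : openSimplex πstar) (hπ' : openSimplex π'star)
    (hφ : ∀ l, openSimplex (φstar l)) : (πstar, π'star, φstar) ∈ paramSpace L K :=
  ⟨hπ.closedSimplex, hπ'.closedSimplex, fun l => (hφ l).closedSimplex⟩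

lemma labeledLaw_pos (hπ : openSimplex πstar) (hφ : ∀ l, openSimplex (φstar l))
    (c : Fin L × Fin K) :
    0 < labeledLaw (πstar, π'star, φstar) c :=
  mul_pos (hπ.1 c.1) ((hφ c.1).1 c.2)

lemma unlabeledLaw_pos (hπ' : openSimplex π'star) (hφ : ∀ l, openSimplex (φstar l))
    (k : Fin K) :
    0 < unlabeledLaw (πstar, π'star, φstar) k :=
  have := nonempty_of_sum_eq_one hπ'.2
  sum_pos (fun l _ => mul_pos (hπ'.1 l) ((hφ l).1 k)) univ_nonempty

lemma eq_of_labeledLaw_eq_of_unlabeledLaw_eq (hθ : θ ∈ paramSpace L K) (hπ : ∀ l, 0 < πstar l)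
    (hφ : ∀ l, ∑ k, φstar l k = 1) (hrank : (Matrix.of φstar).rank = L)
    (h₁ : labeledLaw θ = labeledLaw (πstar, π'star, φstar))
    (h₂ : unlabeledLaw θ = unlabeledLaw (πstar, π'star, φstar)) :
    θ = (πstar, π'star, φstar) := by
  have hinj : Function.Injective fun v => Matrix.vecMul v (Matrix.of φstar) :=
    Matrix.vecMul_injective_iff.mpr (linearIndependent_iff_card_eq_finrank_span.mpr
      ((Fintype.card_fin L).trans ((Matrix.rank_eq_finrank_span_row _).symm.trans hrank).symm))
  obtain ⟨π₁, π₁', φ₁⟩ := θ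
  obtain rfl : π₁ = πstar := funext fun l => by
    simpa [labeledLaw, ← mul_sum, (hθ.2.2 l).2, hφ l] using
      congr_arg (fun f => ∑ k, f (l, k)) h₁
  obtain rfl : φ₁ = φstar := funext fun l => funext fun k =>
    mul_left_cancel₀ (hπ l).ne' (congr_fun h₁ (l, k))
  obtain rfl : π₁' = π'star := hinj (funext fun k => by
    simpa [unlabeledLaw, Matrix.vecMul, dotProduct] using congr_fun h₂ k)
  rfl

end Model

section Consistency

variable {L K : ℕ} {πstar π'star : Fin L → ℝ} {φstar : Fin L → Fin K → ℝ}

theorem exists_truncKL_gap (hπ : openSimplex πstar) (hπ' : openSimplex π'star)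
    (hφ : ∀ l, openSimplex (φstar l)) (hrank : (Matrix.of φstar).rank = L) {ε : ℝ} (hε : 0 < ε) :
    ∃ t, 0 < t ∧ t ≤ 1 ∧ ∃ η > 0, ∀ θ ∈ paramSpace L K, ε ≤ dist θ (πstar, π'star, φstar) →
      η ≤ truncKL (labeledLaw (πstar, π'star, φstar)) (labeledLaw θ) t ∨
        η ≤ truncKL (unlabeledLaw (πstar, π'star, φstar)) (unlabeledLaw θ) t := by
  set θ₀ : Param L K := (πstar, π'star, φstar)
  have hθ₀ : θ₀ ∈ paramSpace L K := mk_mem_paramSpace hπ hπ' hφ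
  set S := paramSpace L K ∩ {θ | ε ≤ dist θ θ₀}
  have hS : IsCompact S := (isCompact_paramSpace L K).inter_right
    (isClosed_le continuous_const (continuous_id.dist continuous_const))
  have hpos : ∀ θ ∈ S, ∃ t > 0, 0 < max (truncKL (labeledLaw θ₀) (labeledLaw θ) t)
      (truncKL (unlabeledLaw θ₀) (unlabeledLaw θ) t) := by
    rintro θ ⟨hθ, hdist⟩
    have hne : θ ≠ θ₀ := dist_pos.mp (hε.trans_le hdist)
    by_cases h₁ : labeledLaw θ = labeledLaw θ₀
    · have h₂ : unlabeledLaw θ ≠ unlabeledLaw θ₀ := fun h₂ =>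
        hne (eq_of_labeledLaw_eq_of_unlabeledLaw_eq hθ hπ.1 (fun l => (hφ l).2) hrank h₁ h₂)
      obtain ⟨t, ht, hKL⟩ := exists_truncKL_pos (unlabeledLaw_pos hπ' hφ) (sum_unlabeledLaw hθ₀)
        (unlabeledLaw_nonneg hθ) (sum_unlabeledLaw hθ).le h₂
      exact ⟨t, ht, lt_max_of_lt_right hKL⟩
    · obtain ⟨t, ht, hKL⟩ := exists_truncKL_pos (labeledLaw_pos hπ hφ) (sum_labeledLaw hθ₀)
        (labeledLaw_nonneg hθ) (sum_labeledLaw hθ).le h₁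
      exact ⟨t, ht, lt_max_of_lt_left hKL⟩
  obtain ⟨t, ht0, ht1, η, hη, hF⟩ := hS.exists_forall_le_of_antitone
    (fun t ht => (continuous_truncKL _ continuous_labeledLaw ht).max
      (continuous_truncKL _ continuous_unlabeledLaw ht))
    (fun θ s hs t hst => max_le_max
      (truncKL_anti (fun c => (labeledLaw_pos hπ hφ c).le) hs hst)
      (truncKL_anti (fun k => (unlabeledLaw_pos hπ' hφ k).le) hs hst)) hpos
  exact ⟨t, ht0, ht1, η, hη, fun θ hθ hdist => le_max_iff.mp (hF θ ⟨hθ, hdist⟩)⟩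

variable {N N' : ℕ} {p : Param L K → ℝ} {ω : (Fin N → Fin L × Fin K) × (Fin N' → Fin K)}
  {θ : Param L K}

lemma posteriorScore_eq (p : Param L K → ℝ) (ω : (Fin N → Fin L × Fin K) × (Fin N' → Fin K))
    (θ : Param L K) :
    posteriorScore p ω θ = p θ * (∏ i, labeledLaw θ (ω.1 i)) * ∏ j, unlabeledLaw θ (ω.2 j) :=
  rfl

lemma labeledLaw_pos_of_posteriorScore_pos (hθ : θ ∈ paramSpace L K)
    (h : 0 < posteriorScore p ω θ) (i : Fin N) : 0 < labeledLaw θ (ω.1 i) := by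
  rw [posteriorScore_eq] at h
  exact (labeledLaw_nonneg hθ _).lt_of_ne'
    (prod_ne_zero_iff.mp (right_ne_zero_of_mul (left_ne_zero_of_mul h.ne')) i (mem_univ i))

lemma unlabeledLaw_pos_of_posteriorScore_pos (hθ : θ ∈ paramSpace L K)
    (h : 0 < posteriorScore p ω θ) (j : Fin N') : 0 < unlabeledLaw θ (ω.2 j) := by
  rw [posteriorScore_eq] at h
  exact (unlabeledLaw_nonneg hθ _).lt_of_ne'
    (prod_ne_zero_iff.mp (right_ne_zero_of_mul h.ne') j (mem_univ j))

lemma log_posteriorScore (hp : p θ ≠ 0) (h₁ : ∀ i, labeledLaw θ (ω.1 i) ≠ 0)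
    (h₂ : ∀ j, unlabeledLaw θ (ω.2 j) ≠ 0) :
    log (posteriorScore p ω θ) =
      log (p θ) + ∑ i, log (labeledLaw θ (ω.1 i)) + ∑ j, log (unlabeledLaw θ (ω.2 j)) := by
  have hprod₁ : ∏ i, labeledLaw θ (ω.1 i) ≠ 0 := prod_ne_zero_iff.mpr fun i _ => h₁ i
  have hprod₂ : ∏ j, unlabeledLaw θ (ω.2 j) ≠ 0 := prod_ne_zero_iff.mpr fun j _ => h₂ j
  rw [posteriorScore_eq, log_mul (mul_ne_zero hp hprod₁) hprod₂, log_mul hp hprod₁,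
    log_prod fun i _ => h₁ i, log_prod fun j _ => h₂ j]

theorem dist_lt_of_forall_posteriorScore_le (hπ : openSimplex πstar)
    (hπ' : openSimplex π'star) (hφ : ∀ l, openSimplex (φstar l))
    (hp : ∀ θ ∈ paramSpace L K, 0 < p θ) {C : ℝ} (hC : ∀ θ ∈ paramSpace L K, |log (p θ)| ≤ C)
    {t η ε T : ℝ} (hgap : ∀ θ ∈ paramSpace L K, ε ≤ dist θ (πstar, π'star, φstar) →
      η ≤ truncKL (labeledLaw (πstar, π'star, φstar)) (labeledLaw θ) t ∨
        η ≤ truncKL (unlabeledLaw (πstar, π'star, φstar)) (unlabeledLaw θ) t)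
    (hω₁ : pearsonChiSq (labeledLaw (πstar, π'star, φstar)) ω.1 < T)
    (hω₂ : pearsonChiSq (unlabeledLaw (πstar, π'star, φstar)) ω.2 < T)
    (hfar₁ : ∀ q : Fin L × Fin K → ℝ, (∀ c, 0 ≤ q c) → ∑ c, q c ≤ 1 → (∀ i, 0 < q (ω.1 i)) →
      η ≤ truncKL (labeledLaw (πstar, π'star, φstar)) q t →
        logLikRatio q (labeledLaw (πstar, π'star, φstar)) ω.1 < -(2 * C + T))
    (hfar₂ : ∀ q : Fin K → ℝ, (∀ k, 0 ≤ q k) → ∑ k, q k ≤ 1 → (∀ j, 0 < q (ω.2 j)) →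
      η ≤ truncKL (unlabeledLaw (πstar, π'star, φstar)) q t →
        logLikRatio q (unlabeledLaw (πstar, π'star, φstar)) ω.2 < -(2 * C + T))
    (hθ : θ ∈ paramSpace L K)
    (hmax : ∀ θ' ∈ paramSpace L K, posteriorScore p ω θ' ≤ posteriorScore p ω θ) :
    dist θ (πstar, π'star, φstar) < ε := by
  set θ₀ : Param L K := (πstar, π'star, φstar)
  have hθ₀ : θ₀ ∈ paramSpace L K := mk_mem_paramSpace hπ hπ' hφ
  have hG₀ : 0 < posteriorScore p ω θ₀ := by
    rw [posteriorScore_eq]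
    exact mul_pos (mul_pos (hp θ₀ hθ₀) (prod_pos fun i _ => labeledLaw_pos hπ hφ _))
      (prod_pos fun j _ => unlabeledLaw_pos hπ' hφ _)
  have hG := hG₀.trans_le (hmax θ₀ hθ₀)
  have hQ := labeledLaw_pos_of_posteriorScore_pos hθ hG
  have hR := unlabeledLaw_pos_of_posteriorScore_pos hθ hG
  have hlog : 0 ≤ log (p θ) - log (p θ₀) + logLikRatio (labeledLaw θ) (labeledLaw θ₀) ω.1 +
      logLikRatio (unlabeledLaw θ) (unlabeledLaw θ₀) ω.2 := by
    have := log_le_log hG₀ (hmax θ₀ hθ₀)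
    rw [log_posteriorScore (hp θ hθ).ne' (fun i => (hQ i).ne') (fun j => (hR j).ne'),
      log_posteriorScore (hp θ₀ hθ₀).ne' (fun i => (labeledLaw_pos hπ hφ _).ne')
        (fun j => (unlabeledLaw_pos hπ' hφ _).ne')] at this
    simp only [logLikRatio, sum_sub_distrib]
    linarith
  have hprior : log (p θ) - log (p θ₀) ≤ 2 * C := by
    linarith [abs_le.mp (hC θ hθ), abs_le.mp (hC θ₀ hθ₀)]
  have hllr₁ := (logLikRatio_le_pearsonChiSq (labeledLaw_pos hπ hφ) (sum_labeledLaw hθ₀)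
    (labeledLaw_nonneg hθ) (sum_labeledLaw hθ).le hQ).trans_lt hω₁
  have hllr₂ := (logLikRatio_le_pearsonChiSq (unlabeledLaw_pos hπ' hφ) (sum_unlabeledLaw hθ₀)
    (unlabeledLaw_nonneg hθ) (sum_unlabeledLaw hθ).le hR).trans_lt hω₂
  by_contra! hfar
  rcases hgap θ hθ hfar with h | h
  · linarith [hfar₁ _ (labeledLaw_nonneg hθ) (sum_labeledLaw hθ).le hQ h]
  · linarith [hfar₂ _ (unlabeledLaw_nonneg hθ) (sum_unlabeledLaw hθ).le hR h]

end Consistency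

theorem map_estimate_consistent_general
    (L K : ℕ)
    (πstar π'star : Fin L → ℝ) (φstar : Fin L → Fin K → ℝ)
    (hπ : openSimplex πstar) (hπ' : openSimplex π'star)
    (hφ : ∀ l, openSimplex (φstar l))
    (hrank : (Matrix.of φstar).rank = L)
    (p : (Fin L → ℝ) × (Fin L → ℝ) × (Fin L → Fin K → ℝ) → ℝ)
    (hpcont : ContinuousOn p (paramSpace L K))
    (hppos : ∀ θ ∈ paramSpace L K, 0 < p θ)
    (ε δ : ℝ) (hε : 0 < ε) (hδ : 0 < δ) :
    ∃ N₀ N₀' : ℕ, 0 < N₀ ∧ 0 < N₀' ∧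
      ∀ (N N' : ℕ), N₀ ≤ N → N₀' ≤ N' →
      ∀ μ : Measure ((Fin N → Fin L × Fin K) × (Fin N' → Fin K)),
        IsProbabilityMeasure μ →
        (∀ ω : (Fin N → Fin L × Fin K) × (Fin N' → Fin K),
          μ {ω} = ENNReal.ofReal
            ((∏ i, πstar (ω.1 i).1 * φstar (ω.1 i).1 (ω.1 i).2) *
              ∏ j, ∑ l, π'star l * φstar l (ω.2 j))) →
        ENNReal.ofReal (1 - δ) ≤
          μ {ω | ∀ θhat ∈ paramSpace L K,
            (∀ θ ∈ paramSpace L K, posteriorScore p ω θ ≤ posteriorScore p ω θhat) →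
            dist θhat (πstar, π'star, φstar) < ε} := by
  have hθ₀ := mk_mem_paramSpace hπ hπ' hφ
  obtain ⟨t, ht0, ht1, η, hη, hgap⟩ := exists_truncKL_gap hπ hπ' hφ hrank hε
  obtain ⟨C, hC⟩ := (isCompact_paramSpace L K).exists_bound_of_continuousOn
    (hpcont.log fun θ hθ => (hppos θ hθ).ne')
  set T : ℝ := (Fintype.card (Fin L × Fin K) + Fintype.card (Fin K)) / δ
  obtain ⟨M, hM⟩ := eventually_atTop.mp
    ((eventually_logLikRatio_lt (labeledLaw_pos hπ hφ) (sum_labeledLaw hθ₀) ht0 ht1 hη T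
      (2 * C + T)).and
    ((eventually_logLikRatio_lt (unlabeledLaw_pos hπ' hφ) (sum_unlabeledLaw hθ₀) ht0 ht1 hη T
      (2 * C + T)).and (eventually_gt_atTop 0)))
  refine ⟨M, M, (hM M le_rfl).2.2, (hM M le_rfl).2.2, fun N N' hN hN' μ _ hμ => ?_⟩
  refine (ofReal_one_sub_le_measure_pearsonChiSq_lt (hM N hN).2.2.ne' (hM N' hN').2.2.ne'
    (labeledLaw_pos hπ hφ) (sum_labeledLaw hθ₀) (unlabeledLaw_pos hπ' hφ) (sum_unlabeledLaw hθ₀)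
    hμ hδ).trans (measure_mono fun ω ⟨h₁, h₂⟩ θ hθ hmax => ?_)
  exact dist_lt_of_forall_posteriorScore_le hπ hπ' hφ hppos hC hgap h₁ h₂
    ((hM N hN).1 _ h₁) ((hM N' hN').2.1 _ h₂) hθ hmax

/-- Consistency of the MAP estimate. With `π*, π'*` in the open simplices,
row-wise open-simplex `φ*` of full rank `L`, and a continuous strictly positive prior
density `p` on the compact parameter space `Θ`, for every `ε, δ > 0` there are `N₀, N₀'`
such that for all `N ≥ N₀`, `N' ≥ N₀'`: for labeled data `(Y_i, C_i)` i.i.d. with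
`P(Y_i = l, C_i = k) = π*_l φ*_{lk}`, independent of unlabeled data `C'_j` i.i.d. with
`P(C'_j = k) = Σ_l π'*_l φ*_{lk}` (encoded by the canonical product measure `μ` on the
sample space), with probability at least `1 - δ` every maximizer of the posterior score
`G_{N,N'}` over `Θ` lies within `ε` of `(π*, π'*, φ*)`. -/
theorem map_estimate_consistent
    (L K : ℕ) (hL : 0 < L) (hK : 0 < K)
    (πstar π'star : Fin L → ℝ) (φstar : Fin L → Fin K → ℝ)
    (hπ : openSimplex πstar) (hπ' : openSimplex π'star)
    (hφ : ∀ l, openSimplex (φstar l))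
    (hrank : (Matrix.of φstar).rank = L)
    (p : (Fin L → ℝ) × (Fin L → ℝ) × (Fin L → Fin K → ℝ) → ℝ)
    (hpcont : ContinuousOn p (paramSpace L K))
    (hppos : ∀ θ ∈ paramSpace L K, 0 < p θ)
    (ε δ : ℝ) (hε : 0 < ε) (hδ : 0 < δ) :
    ∃ N₀ N₀' : ℕ, 0 < N₀ ∧ 0 < N₀' ∧
      ∀ (N N' : ℕ), N₀ ≤ N → N₀' ≤ N' →
      ∀ μ : Measure ((Fin N → Fin L × Fin K) × (Fin N' → Fin K)),
        IsProbabilityMeasure μ →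
        (∀ ω : (Fin N → Fin L × Fin K) × (Fin N' → Fin K),
          μ {ω} = ENNReal.ofReal
            ((∏ i, πstar (ω.1 i).1 * φstar (ω.1 i).1 (ω.1 i).2) *
              ∏ j, ∑ l, π'star l * φstar l (ω.2 j))) →
        ENNReal.ofReal (1 - δ) ≤
          μ {ω | ∀ θhat ∈ paramSpace L K,
            (∀ θ ∈ paramSpace L K, posteriorScore p ω θ ≤ posteriorScore p ω θhat) →
            dist θhat (πstar, π'star, φstar) < ε} :=
  map_estimate_consistent_general L K πstar π'star φstar hπ hπ' hφ hrank p hpcont hppos ε δ hε hδ
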